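/- arXiv:1201.4912 — 2 statements merged into one kernel-verified Lean document; each statement's English description precedes it below -/
import Mathlib

section
/- Let q be an even integer with q ≥ 6 and let G be a C₄-free simple graph on q²+q vertices with maximum degree at most q+1 and at least (1/2)·q·(q+1)² − q edges. If v is a vertex of G of degree q+1, then the sum of the degrees of the neighbors of v is at most q²+2q−1. -/
/-!
Double count the paths `v – w – u` with `w ∈ Γ(v)`: the degree sum over `Γ(v)` equals
`∑ᵤ |Γ(u) ∩ Γ(v)|`. The term `u = v` is `deg v`, and every other term is at most `1` by
`C₄`-freeness. For `u ∈ Γ(v)` the term is the degree of `u` in the graph induced on `Γ(v)`, so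
these terms have an even sum; as `|Γ(v)| = q + 1` is odd, one of them vanishes. Hence the degree
sum is at most `deg v + (|V| - 2)`.
-/

/-- A simple graph is `C₄`-free iff no two distinct vertices have two or more
common neighbors. -/
def C4Free {V : Type*} (G : SimpleGraph V) : Prop :=
  ∀ u v : V, u ≠ v → {w : V | G.Adj u w ∧ G.Adj v w}.Subsingleton

open Finset

theorem Finset.sum_lt_card_of_le_one {ι : Type*} {s : Finset ι} {f : ι → ℕ}
    (hf : ∀ i ∈ s, f i ≤ 1) (heven : Even (∑ i ∈ s, f i)) (hodd : Odd #s) :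
    ∑ i ∈ s, f i < #s := by
  have hle : ∑ i ∈ s, f i ≤ #s := by simpa using sum_le_card_nsmul s f 1 hf
  refine hle.lt_of_ne fun h => ?_
  rw [h] at heven
  exact Nat.not_even_iff_odd.2 hodd heven

namespace SimpleGraph

variable {V : Type*} [Fintype V] [DecidableEq V] (G : SimpleGraph V) [DecidableRel G.Adj]

theorem sum_degree_neighborFinset (v : V) :
    ∑ w ∈ G.neighborFinset v, G.degree w = ∑ u, #(G.neighborFinset u ∩ G.neighborFinset v) := by
  have := sum_card_bipartiteAbove_eq_sum_card_bipartiteBelow (s := G.neighborFinset v)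
    (t := univ) (r := G.Adj)
  simp only [bipartiteAbove, bipartiteBelow, ← neighborFinset_eq_filter,
    card_neighborFinset_eq_degree] at this
  rw [this]
  refine sum_congr rfl fun u _ => congrArg card ?_
  ext w
  simp [adj_comm, and_comm]

theorem even_sum_card_neighborFinset_inter (s : Finset V) :
    Even (∑ u ∈ s, #(G.neighborFinset u ∩ s)) := by
  have hdeg : ∀ u : (s : Set V), (G.induce s).degree u = #(G.neighborFinset u ∩ s) := by
    intro u
    rw [← card_neighborFinset_eq_degree, ← card_map (.subtype _)]
    convert congrArg card (G.map_neighborFinset_induce u)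
    simp
  rw [← sum_coe_sort s]
  simp_rw [← hdeg]
  exact (G.induce s).sum_degrees_eq_twice_card_edges ▸ even_two_mul _

end SimpleGraph

namespace C4Free

variable {V : Type*} [Fintype V] [DecidableEq V] {G : SimpleGraph V} [DecidableRel G.Adj]

theorem card_neighborFinset_inter_le_one (hG : C4Free G) {u v : V} (huv : u ≠ v) :
    #(G.neighborFinset u ∩ G.neighborFinset v) ≤ 1 := by
  rw [card_le_one]
  intro a ha b hb
  simp only [mem_inter, SimpleGraph.mem_neighborFinset] at ha hb
  exact hG u v huv ha hb

theorem sum_degree_neighborFinset_le (hG : C4Free G) {v : V} (hv : Odd (G.degree v)) :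
    ∑ w ∈ G.neighborFinset v, G.degree w ≤ G.degree v + Fintype.card V - 2 := by
  set c : V → ℕ := fun u => #(G.neighborFinset u ∩ G.neighborFinset v)
  have hc : ∀ u ∈ univ.erase v, c u ≤ 1 := fun u hu =>
    hG.card_neighborFinset_inter_le_one (ne_of_mem_erase hu)
  have hsub : G.neighborFinset v ⊆ univ.erase v := fun w hw =>
    mem_erase.2 ⟨((G.mem_neighborFinset v w).1 hw).ne', mem_univ w⟩
  have hN : ∑ u ∈ G.neighborFinset v, c u < G.degree v := by
    rw [← G.card_neighborFinset_eq_degree] at hv ⊢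
    exact sum_lt_card_of_le_one (fun u hu => hc u (hsub hu))
      (G.even_sum_card_neighborFinset_inter _) hv
  have hrest : ∑ u ∈ univ.erase v, c u < Fintype.card V - 1 := by
    rw [← sum_sdiff hsub, ← card_univ, ← card_erase_of_mem (mem_univ v),
      ← card_sdiff_add_card_eq_card hsub, G.card_neighborFinset_eq_degree]
    refine add_lt_add_of_le_of_lt ?_ hN
    simpa using sum_le_card_nsmul _ c 1 fun u hu => hc u (sdiff_subset hu)
  have hcv : c v = G.degree v := by simp [c, G.card_neighborFinset_eq_degree]
  rw [G.sum_degree_neighborFinset, ← add_sum_erase _ _ (mem_univ v)]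
  change c v + ∑ u ∈ univ.erase v, c u ≤ _
  omega

end C4Free

theorem sum_degree_neighbors_le_general (q : ℕ) (hqe : Even q)
    (G : SimpleGraph (Fin (q ^ 2 + q))) [DecidableRel G.Adj] (hG : C4Free G)
    (v : Fin (q ^ 2 + q)) (hv : G.degree v = q + 1) :
    ∑ w ∈ G.neighborFinset v, G.degree w ≤ q ^ 2 + 2 * q - 1 := by
  have h := hG.sum_degree_neighborFinset_le (hv ▸ hqe.add_one)
  rw [hv, Fintype.card_fin] at h
  omega

/-- Let `q ≥ 6` be even and let `G` be a `C₄`-free graph on `q² + q` vertices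
with maximum degree at most `q + 1` and at least `E₀ = q(q+1)²/2 - q` edges.
If `v` has degree `q + 1`, then the sum of the degrees of the neighbors
of `v` is at most `q² + 2q - 1`. -/
theorem sum_degree_neighbors_le (q : ℕ) (hq : 6 ≤ q) (hqe : Even q)
    (G : SimpleGraph (Fin (q ^ 2 + q))) [DecidableRel G.Adj] (hG : C4Free G)
    (hΔ : ∀ v, G.degree v ≤ q + 1)
    (he : q * (q + 1) ^ 2 / 2 - q ≤ G.edgeFinset.card)
    (v : Fin (q ^ 2 + q)) (hv : G.degree v = q + 1) :
    ∑ w ∈ G.neighborFinset v, G.degree w ≤ q ^ 2 + 2 * q - 1 :=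
  sum_degree_neighbors_le_general q hqe G hG v hv
end

section
/- Let q be an even integer with q ≥ 6 and suppose G is a C₄-free simple graph on q²+q vertices with exactly e = (1/2)·q·(q+1)² − q + 1 edges and maximum degree at most q+2. Then the number of paths of length 2 in G, namely ∑_{v} C(d(v), 2) where the sum is over all vertices v and C(·,2) denotes the binomial coefficient, satisfies 2·∑_{v} C(d(v), 2) ≤ 2·q·e − 2·|X_{q+1}| + |X_{q+2}|, where X_k denotes the set of vertices of degree k. -/
/-- `degCount G k` is the number of vertices of `G` of degree exactly `k`,
i.e. `|X_k|`. -/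
def degCount {n : ℕ} (G : SimpleGraph (Fin n)) [DecidableRel G.Adj] (k : ℕ) : ℕ :=
  (Finset.univ.filter fun v => G.degree v = k).card

/-!
Counting each 2-path from both of its endpoints `u`, `2 ∑_v C(d(v), 2) = ∑_u ∑_{x ∼ u} (d(x) - 1)`.
In a `C₄`-free graph the sets `N(x) \ {u}` for `x ∼ u` are pairwise disjoint and avoid `u`, so
the inner sum is at most `n - 1 = q² + q - 1`. If `d(u) = q + 1` is odd, `N(u)` induces a
matching (again by `C₄`-freeness) which cannot cover all of `N(u)`; an uncovered neighbour is
missed as well, improving the bound to `n - 2`. If `d(u) ≤ q`, then `d(x) - 1 ≤ q`, with an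
excess of one for each neighbour of degree `q + 2`. As `q² + q = q (q + 1) = q (q + 2) - (q + 1)`,
each `u` contributes at most `q d(u) - 2 [d(u) = q+1] - (q+1) [d(u) = q+2] + #{x ∼ u | d(x) = q+2}`,
and the last terms sum to `(q + 2) |X_{q+2}|`.
-/

open Finset SimpleGraph

variable {V : Type*} {G : SimpleGraph V}

lemma Nat.two_mul_choose_two (n : ℕ) : 2 * n.choose 2 = n * (n - 1) := by
  rw [Nat.choose_two_right, Nat.mul_div_cancel' (Nat.even_mul_pred_self n).two_dvd]

namespace SimpleGraph

variable [Fintype V] [DecidableRel G.Adj]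

lemma sum_sum_neighborFinset {M : Type*} [AddCommMonoid M] (f : V → M) :
    ∑ u, ∑ x ∈ G.neighborFinset u, f x = ∑ x, G.degree x • f x := by
  rw [Finset.sum_comm' (t' := univ) (s' := fun x => G.neighborFinset x) (by simp [adj_comm])]
  simp [card_neighborFinset_eq_degree]

lemma sum_card_filter_neighborFinset_degree_eq (k : ℕ) :
    ∑ u, #{x ∈ G.neighborFinset u | G.degree x = k} = k * #{x | G.degree x = k} := by
  simp_rw [card_filter, sum_sum_neighborFinset, smul_eq_mul, mul_boole, mul_sum]
  exact sum_congr rfl fun x _ => by split_ifs with h <;> simp [h]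

end SimpleGraph

namespace C4Free

theorem exists_mem_neighborSet_forall_not_adj (hG : C4Free G) {u : V}
    [Fintype (G.neighborSet u)] (hodd : Odd (G.degree u)) :
    ∃ x ∈ G.neighborSet u, ∀ y ∈ G.neighborSet u, ¬ G.Adj x y := by
  by_contra! h
  have hM : ((⊤ : G.Subgraph).induce (G.neighborSet u)).IsMatching := by
    intro x hx
    obtain ⟨y, hy, hxy⟩ := h x hx
    exact ⟨y, ⟨hx, hy, hxy⟩, fun z hz => hG u x (G.ne_of_adj hx) ⟨hz.2.1, hz.2.2⟩ ⟨hy, hxy⟩⟩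
  have : Fintype ((⊤ : G.Subgraph).induce (G.neighborSet u)).verts :=
    inferInstanceAs (Fintype (G.neighborSet u))
  have heven : Even #(G.neighborFinset u) := by
    convert hM.even_card using 2
    ext
    simp
  rw [card_neighborFinset_eq_degree] at heven
  exact Nat.not_even_iff_odd.2 hodd heven

variable [Fintype V] [DecidableEq V] [DecidableRel G.Adj]

theorem sum_degree_sub_one_add_card_le (hG : C4Free G) (u : V) {t : Finset V}
    (ht : ∀ w ∈ t, w = u ∨ ∀ x ∈ G.neighborSet u, ¬ G.Adj x w) :
    ∑ x ∈ G.neighborFinset u, (G.degree x - 1) + #t ≤ Fintype.card V := by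
  set S := (G.neighborFinset u).biUnion fun x => (G.neighborFinset x).erase u
  have hS : #S = ∑ x ∈ G.neighborFinset u, (G.degree x - 1) := by
    rw [card_biUnion]
    · refine sum_congr rfl fun x hx => ?_
      rw [mem_neighborFinset] at hx
      rw [card_erase_of_mem ((G.mem_neighborFinset _ _).2 hx.symm),
        card_neighborFinset_eq_degree]
    · intro x hx y hy hxy
      refine disjoint_left.2 fun w hwx hwy => ?_
      simp only [mem_coe, mem_erase, mem_neighborFinset] at hx hy hwx hwy
      exact hxy (hG u w (Ne.symm hwx.1) ⟨hx, hwx.2.symm⟩ ⟨hy, hwy.2.symm⟩)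
  have hSt : Disjoint S t := by
    refine disjoint_left.2 fun w hwS hwt => ?_
    simp only [S, mem_biUnion, mem_erase, mem_neighborFinset] at hwS
    obtain ⟨x, hux, hwu, hxw⟩ := hwS
    rcases ht w hwt with rfl | hw
    · exact hwu rfl
    · exact hw x hux hxw
  rw [← hS, ← card_union_of_disjoint hSt]
  exact card_le_univ _

theorem sum_degree_sub_one_add_le (hG : C4Free G) {q : ℕ} (hq : Even q)
    (hΔ : ∀ v, G.degree v ≤ q + 2) (hV : Fintype.card V ≤ q ^ 2 + q) (u : V) :
    ∑ x ∈ G.neighborFinset u, (G.degree x - 1) + (if G.degree u = q + 1 then 2 else 0)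
        + (if G.degree u = q + 2 then q + 1 else 0)
      ≤ q * G.degree u + #{x ∈ G.neighborFinset u | G.degree x = q + 2} := by
  rcases (hΔ u).lt_or_eq with hu | hu
  rcases (Nat.lt_succ_iff.1 hu).lt_or_eq with hu | hu
  · rw [if_neg (by omega), if_neg (by omega), add_zero, add_zero, card_filter,
      ← card_neighborFinset_eq_degree, mul_comm, ← smul_eq_mul, ← sum_const, ← sum_add_distrib]
    refine sum_le_sum fun x _ => ?_
    have := hΔ x
    split_ifs <;> omega
  · obtain ⟨x₀, hx₀, hx₀iso⟩ := hG.exists_mem_neighborSet_forall_not_adj (hu ▸ hq.add_one)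
    have := hG.sum_degree_sub_one_add_card_le u (t := {u, x₀}) <| by
      simp only [mem_insert, mem_singleton]
      rintro w (rfl | rfl)
      exacts [Or.inl rfl, Or.inr fun y hy h => hx₀iso y hy h.symm]
    rw [card_pair (G.ne_of_adj hx₀)] at this
    simp only [hu, if_true, if_neg (by omega : q + 1 ≠ q + 2)]
    nlinarith
  · have := hG.sum_degree_sub_one_add_card_le u (t := {u}) (by simp)
    simp only [card_singleton] at this
    simp only [hu, if_true, if_neg (by omega : q + 2 ≠ q + 1)]
    nlinarith

theorem two_mul_sum_choose_two_add_le (hG : C4Free G) {q : ℕ} (hq : Even q)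
    (hΔ : ∀ v, G.degree v ≤ q + 2) (hV : Fintype.card V ≤ q ^ 2 + q) :
    2 * ∑ v, (G.degree v).choose 2 + 2 * #{v | G.degree v = q + 1}
        + (q + 1) * #{v | G.degree v = q + 2}
      ≤ 2 * q * #G.edgeFinset + (q + 2) * #{v | G.degree v = q + 2} := by
  have h := sum_le_sum fun u (_ : u ∈ univ) => hG.sum_degree_sub_one_add_le hq hΔ hV u
  simp only [sum_add_distrib, sum_sum_neighborFinset, ← sum_filter, sum_const, smul_eq_mul,
    ← mul_sum, sum_degrees_eq_twice_card_edges, sum_card_filter_neighborFinset_degree_eq] at h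
  simp only [mul_sum, Nat.two_mul_choose_two]
  linarith

end C4Free

theorem two_path_count_bound_general (q : ℕ) (hqe : Even q)
    (G : SimpleGraph (Fin (q ^ 2 + q))) [DecidableRel G.Adj] (hG : C4Free G)
    (hΔ : ∀ v, G.degree v ≤ q + 2) :
    (2 * ∑ v : Fin (q ^ 2 + q), (G.degree v).choose 2 : ℤ) ≤
      2 * q * G.edgeFinset.card - 2 * degCount G (q + 1) + degCount G (q + 2) := by
  have h := hG.two_mul_sum_choose_two_add_le hqe hΔ (Fintype.card_fin _).le
  have hZ := Nat.cast_le (α := ℤ) |>.2 h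
  push_cast at hZ
  unfold degCount
  push_cast
  linarith

/-- Let `q ≥ 6` be even and let `G` be a `C₄`-free graph on `q² + q` vertices
with maximum degree at most `q + 2` and exactly `e = E₀ + 1 = q(q+1)²/2 - q + 1`
edges.  Then the number `∑_v C(d(v), 2)` of 2-paths of `G` satisfies
`2 ∑_v C(d(v), 2) ≤ 2 q e - 2 |X_{q+1}| + |X_{q+2}|`. -/
theorem two_path_count_bound (q : ℕ) (hq : 6 ≤ q) (hqe : Even q)
    (G : SimpleGraph (Fin (q ^ 2 + q))) [DecidableRel G.Adj] (hG : C4Free G)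
    (hΔ : ∀ v, G.degree v ≤ q + 2)
    (he : G.edgeFinset.card = q * (q + 1) ^ 2 / 2 - q + 1) :
    (2 * ∑ v : Fin (q ^ 2 + q), (G.degree v).choose 2 : ℤ) ≤
      2 * q * G.edgeFinset.card - 2 * degCount G (q + 1) + degCount G (q + 2) :=
  two_path_count_bound_general q hqe G hG hΔ
end
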